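/- arXiv:0803.1715 — 3 statements merged into one kernel-verified Lean document; each statement's English description precedes it below -/
import Mathlib

section
/- If a set A has ordinal rank at most n (where n is a natural number), then F(n, A) = A; consequently F(rank(A) + m, A) = A for every natural number m whenever A is hereditarily finite. -/
open ZFSet

/-- The approximation function: `F 0 A = ∅`, `F (n+1) A = {F n x | x ∈ A}`. -/
noncomputable def F : ℕ → ZFSet → ZFSet
  | 0, _ => ∅
  | n + 1, A => @ZFSet.image (F n) (Classical.allZFSetDefinable fun s => F n (s 0)) A

theorem mem_F_succ {n : ℕ} {A x : ZFSet} : x ∈ F (n + 1) A ↔ ∃ y ∈ A, F n y = x :=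
  @ZFSet.mem_image (F n) (Classical.allZFSetDefinable _) A x

theorem F_eq_of_rank_le {n : ℕ} {A : ZFSet} (h : A.rank ≤ n) : F n A = A := by
  induction n generalizing A with
  | zero =>
    ext x
    simp only [F, notMem_empty, false_iff]
    exact fun hx => not_lt_zero (by exact_mod_cast (rank_lt_of_mem hx).trans_le h)
  | succ n ih =>
    have F_mem : ∀ y ∈ A, F n y = y := fun y hy =>
      ih (Order.lt_add_one_iff.mp (by exact_mod_cast (rank_lt_of_mem hy).trans_le h))
    ext x
    rw [mem_F_succ]
    constructor
    · rintro ⟨y, hy, rfl⟩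
      rwa [F_mem y hy]
    · exact fun hx => ⟨x, hx, F_mem x hx⟩

theorem stmt_1 :
    (∀ (n : ℕ) (A : ZFSet), A.rank ≤ (n : Ordinal) → F n A = A) ∧
    (∀ (A : ZFSet) (k : ℕ), A.rank = (k : Ordinal) → ∀ m : ℕ, F (k + m) A = A) := by
  refine ⟨fun _ _ => F_eq_of_rank_le, fun A k hk m => F_eq_of_rank_le ?_⟩
  rw [hk, Nat.cast_add]
  exact le_self_add
end

section
/- If F(n, a) ∈ F(n+1, A) for some natural number n, then F(m, a) ∈ F(m+1, A) for every natural number m ≤ n. -/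
open ZFSet

noncomputable instance (n : ℕ) : ZFSet.Definable₁ (F n) :=
  Classical.allZFSetDefinable _

theorem stmt_10 (a A : ZFSet) (n : ℕ) (h : F n a ∈ F (n + 1) A)
    (m : ℕ) (hm : m ≤ n) : F m a ∈ F (m + 1) A := by
  obtain ⟨x, hxA, hx⟩ := ZFSet.mem_image.1 h
  refine ZFSet.mem_image.2 ⟨x, hxA, ?_⟩
  have key : ∀ (k : ℕ) (x y : ZFSet), F (k + 1) x = F (k + 1) y → F k x = F k y := by
    intro k
    induction k with
    | zero => intro x y _; rfl
    | succ k ih =>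
      intro x y hxy
      apply ZFSet.ext
      intro z
      constructor
      · intro hz
        obtain ⟨u, hu, hu2⟩ := ZFSet.mem_image.1 hz
        have : F (k + 1) u ∈ F (k + 2) y := by
          rw [← hxy]; exact ZFSet.mem_image.2 ⟨u, hu, rfl⟩
        obtain ⟨v, hv, hv2⟩ := ZFSet.mem_image.1 this
        exact ZFSet.mem_image.2 ⟨v, hv, by rw [ih v u hv2, hu2]⟩
      · intro hz
        obtain ⟨u, hu, hu2⟩ := ZFSet.mem_image.1 hz
        have : F (k + 1) u ∈ F (k + 2) x := by
          rw [hxy]; exact ZFSet.mem_image.2 ⟨u, hu, rfl⟩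
        obtain ⟨v, hv, hv2⟩ := ZFSet.mem_image.1 this
        exact ZFSet.mem_image.2 ⟨v, hv, by rw [ih v u hv2, hu2]⟩
  clear h hxA
  revert hx
  induction hm with
  | refl => exact id
  | @step p _ ih => exact fun h => ih (key p x a h)
end

section
/- If A and B are hereditarily finite sets (sets of finite ordinal rank) and F(n, A) = F(n, B) for every natural number n, then A = B. -/
open ZFSet

lemma F_fix : ∀ (n : ℕ) (A : ZFSet), A.rank < n → F n A = A := by
  intro n
  induction n with
  | zero => intro A hA; exact absurd hA (by simp)
  | succ n ih =>
    intro A hA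
    have : ∀ x ∈ A, F n x = x := by
      intro x hx
      apply ih
      have h1 : x.rank < A.rank := ZFSet.rank_lt_of_mem hx
      have h2 : A.rank < (n + 1 : ℕ) := hA
      have : A.rank ≤ n := by
        rwa [Nat.cast_succ, Ordinal.add_one_eq_succ, Order.lt_succ_iff] at h2
      exact lt_of_lt_of_le h1 this
    ext y
    simp only [F, ZFSet.mem_image]
    constructor
    · rintro ⟨x, hx, rfl⟩; rw [this x hx]; exact hx
    · intro hy; exact ⟨y, hy, this y hy⟩

theorem stmt_11 (A B : ZFSet) (hA : ∃ k : ℕ, A.rank = (k : Ordinal))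
    (hB : ∃ k : ℕ, B.rank = (k : Ordinal))
    (h : ∀ n : ℕ, F n A = F n B) : A = B := by
  obtain ⟨k, hk⟩ := hA
  obtain ⟨m, hm⟩ := hB
  have hAk : A.rank < (k + m + 1 : ℕ) := by
    rw [hk]; exact_mod_cast Nat.lt_succ_of_le (Nat.le_add_right _ _)
  have hBm : B.rank < (k + m + 1 : ℕ) := by
    rw [hm]; exact_mod_cast Nat.lt_succ_of_le (Nat.le_add_left _ _)
  rw [← F_fix _ A hAk, ← F_fix _ B hBm, h]
end
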